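/- Let T : X → Y be a lattice homomorphism between two Archimedean vector lattices X and Y, let x_1,…,x_m ∈ X for some m ∈ ℕ, and set e = ⋁_{j=1}^m |x_j| ∈ X₊. Then ‖Tx‖_{Te} = ‖x‖_e for every x ∈ I_e if and only if the restriction of T to I_e is injective. -/

import Mathlib

/-!
The inequality `‖Tx‖_{Te} ≤ ‖x‖_e` is automatic, as `T` maps `|a| ≤ c • e` to `|Ta| ≤ c • Te`.
In an Archimedean vector lattice the infimum defining `‖a‖_e` is attained: `|a| ≤ ‖a‖_e • e`.
Hence, with `l = ‖Ta‖_{Te}`, the lattice homomorphism `T` kills `(|a| - l • e)⁺ ∈ I_e`; if `T` is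
injective on `I_e` this element vanishes, i.e. `‖a‖_e ≤ l`. Conversely an isometry on `I_e` kills
no nonzero element of `I_e`, because `‖·‖_e` is a norm there.
-/

/-- Membership in the order ideal `I_e` generated by `e`:
`a ∈ I_e` iff `|a| ≤ c • e` for some `c ∈ [0,∞)`. -/
def memIdeal {X : Type*} [Lattice X] [AddCommGroup X] [Module ℝ X] (e a : X) : Prop :=
  ∃ c : ℝ, 0 ≤ c ∧ |a| ≤ c • e

/-- The seminorm `‖a‖_e = inf { c ∈ [0,∞) : |a| ≤ c • e }` on `I_e`. -/
noncomputable def eNorm {X : Type*} [Lattice X] [AddCommGroup X] [Module ℝ X] (e a : X) : ℝ :=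
  sInf { c : ℝ | 0 ≤ c ∧ |a| ≤ c • e }

lemma eq_zero_of_abs_nonpos {G : Type*} [Lattice G] [AddCommGroup G]
    [CovariantClass G G (· + ·) (· ≤ ·)] {a : G} (h : |a| ≤ 0) : a = 0 :=
  le_antisymm ((le_abs_self a).trans h) (neg_nonpos.mp ((neg_le_abs a).trans h))

section OrderIdeal

variable {X : Type*} [Lattice X] [AddCommGroup X] [Module ℝ X]

lemma memIdeal.of_abs_le {e a b : X} (ha : memIdeal e a) (hba : |b| ≤ |a|) : memIdeal e b :=
  let ⟨c, hc, hac⟩ := ha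
  ⟨c, hc, hba.trans hac⟩

lemma eNorm_nonneg (e a : X) : 0 ≤ eNorm e a :=
  Real.sInf_nonneg fun _ hc => hc.1

lemma eNorm_le_of_abs_le_smul {e a : X} {c : ℝ} (hc : 0 ≤ c) (hac : |a| ≤ c • e) :
    eNorm e a ≤ c :=
  csInf_le ⟨0, fun _ hd => hd.1⟩ ⟨hc, hac⟩

variable [CovariantClass X X (· + ·) (· ≤ ·)]

lemma memIdeal_zero (e : X) : memIdeal e 0 :=
  ⟨0, le_rfl, by simp⟩

lemma eNorm_zero (e : X) : eNorm e 0 = 0 :=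
  le_antisymm (eNorm_le_of_abs_le_smul le_rfl (by simp)) (eNorm_nonneg e 0)

lemma memIdeal.sub {e a b : X} (ha : memIdeal e a) (hb : memIdeal e b) : memIdeal e (a - b) := by
  obtain ⟨c, hc, hac⟩ := ha
  obtain ⟨d, hd, hbd⟩ := hb
  refine ⟨c + d, add_nonneg hc hd, ?_⟩
  calc |a - b| ≤ |a| + |-b| := by rw [sub_eq_add_neg]; exact abs_add_le _ _
    _ ≤ c • e + d • e := by rw [abs_neg]; exact add_le_add hac hbd
    _ = (c + d) • e := (add_smul c d e).symm

variable [PosSMulMono ℝ X]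

lemma smul_le_smul_of_le_of_nonneg {c d : ℝ} {e : X} (hcd : c ≤ d) (he : 0 ≤ e) :
    c • e ≤ d • e := by
  have : 0 ≤ (d - c) • e := smul_nonneg (sub_nonneg.2 hcd) he
  rwa [sub_smul, sub_nonneg] at this

lemma abs_le_smul_of_eNorm_lt {e a : X} {c : ℝ} (he : 0 ≤ e) (ha : memIdeal e a)
    (hc : eNorm e a < c) : |a| ≤ c • e := by
  obtain ⟨d, ⟨-, had⟩, hdc⟩ := (csInf_lt_iff ⟨0, fun _ hd => hd.1⟩ ha).mp hc
  exact had.trans (smul_le_smul_of_le_of_nonneg hdc.le he)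

lemma abs_le_eNorm_smul (harch : ∀ x y : X, (∀ n : ℕ, n • x ≤ y) → x ≤ 0)
    {e a : X} (he : 0 ≤ e) (ha : memIdeal e a) : |a| ≤ eNorm e a • e := by
  refine sub_nonpos.mp (harch _ e fun n => ?_)
  rcases Nat.eq_zero_or_pos n with rfl | hn
  · simpa using he
  have hn' : (0 : ℝ) < n := Nat.cast_pos.mpr hn
  have hle : |a| ≤ (eNorm e a + (n : ℝ)⁻¹) • e :=
    abs_le_smul_of_eNorm_lt he ha (lt_add_of_pos_right _ (inv_pos.mpr hn'))
  have hsub : |a| - eNorm e a • e ≤ (n : ℝ)⁻¹ • e := by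
    rw [add_smul] at hle
    exact sub_le_iff_le_add'.mpr hle
  calc n • (|a| - eNorm e a • e) = (n : ℝ) • (|a| - eNorm e a • e) :=
        (Nat.cast_smul_eq_nsmul ℝ n _).symm
    _ ≤ (n : ℝ) • (n : ℝ)⁻¹ • e := smul_le_smul_of_nonneg_left hsub hn'.le
    _ = e := by rw [smul_smul, mul_inv_cancel₀ hn'.ne', one_smul]

lemma eq_zero_of_eNorm_eq_zero (harch : ∀ x y : X, (∀ n : ℕ, n • x ≤ y) → x ≤ 0)
    {e a : X} (he : 0 ≤ e) (ha : memIdeal e a) (h : eNorm e a = 0) : a = 0 := by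
  have := abs_le_eNorm_smul harch he ha
  rw [h, zero_smul] at this
  exact eq_zero_of_abs_nonpos this

end OrderIdeal

namespace LinearMap

variable {X Y : Type*} [Lattice X] [AddCommGroup X] [Module ℝ X]
    [Lattice Y] [AddCommGroup Y] [Module ℝ Y] {T : X →ₗ[ℝ] Y}

lemma monotone_of_map_sup (hT : ∀ a b : X, T (a ⊔ b) = T a ⊔ T b) : Monotone T :=
  fun a b hab => calc
    T a ≤ T a ⊔ T b := le_sup_left
    _ = T b := by rw [← hT, sup_eq_right.mpr hab]

lemma map_abs_of_map_sup (hT : ∀ a b : X, T (a ⊔ b) = T a ⊔ T b) (a : X) :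
    T |a| = |T a| := by
  change T (a ⊔ -a) = T a ⊔ -T a
  rw [hT, map_neg]

lemma map_posPart_of_map_sup (hT : ∀ a b : X, T (a ⊔ b) = T a ⊔ T b) (a : X) :
    T a⁺ = (T a)⁺ := by
  rw [posPart_def, posPart_def, hT, map_zero]

lemma abs_map_le_smul_of_map_sup (hT : ∀ a b : X, T (a ⊔ b) = T a ⊔ T b)
    {e a : X} {c : ℝ} (hac : |a| ≤ c • e) : |T a| ≤ c • T e := by
  simpa only [map_abs_of_map_sup hT, map_smul] using monotone_of_map_sup hT hac

lemma memIdeal_map_of_map_sup (hT : ∀ a b : X, T (a ⊔ b) = T a ⊔ T b)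
    {e a : X} (ha : memIdeal e a) : memIdeal (T e) (T a) :=
  let ⟨c, hc, hac⟩ := ha
  ⟨c, hc, abs_map_le_smul_of_map_sup hT hac⟩

lemma eNorm_map_le_of_map_sup (hT : ∀ a b : X, T (a ⊔ b) = T a ⊔ T b)
    {e a : X} (ha : memIdeal e a) : eNorm (T e) (T a) ≤ eNorm e a :=
  csInf_le_csInf ⟨0, fun _ hc => hc.1⟩ ha
    fun _ ⟨hc, hac⟩ => ⟨hc, abs_map_le_smul_of_map_sup hT hac⟩

lemma le_eNorm_map_of_map_sup [CovariantClass X X (· + ·) (· ≤ ·)] [PosSMulMono ℝ X]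
    [CovariantClass Y Y (· + ·) (· ≤ ·)] [PosSMulMono ℝ Y]
    (hT : ∀ a b : X, T (a ⊔ b) = T a ⊔ T b)
    (harchY : ∀ x y : Y, (∀ n : ℕ, n • x ≤ y) → x ≤ 0) {e : X} (he : 0 ≤ e)
    (hinj : ∀ b : X, memIdeal e b → T b = 0 → b = 0) {a : X} (ha : memIdeal e a) :
    eNorm e a ≤ eNorm (T e) (T a) := by
  set l := eNorm (T e) (T a)
  have hTe : 0 ≤ T e := by simpa using monotone_of_map_sup hT he
  have hTa : |T a| ≤ l • T e := abs_le_eNorm_smul harchY hTe (memIdeal_map_of_map_sup hT ha)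
  have hle : (|a| - l • e)⁺ ≤ |a| :=
    sup_le (sub_le_self _ (smul_nonneg (eNorm_nonneg _ _) he)) (abs_nonneg a)
  have hmem : memIdeal e (|a| - l • e)⁺ :=
    ha.of_abs_le (by rwa [abs_of_nonneg (posPart_nonneg _)])
  have hker : T (|a| - l • e)⁺ = 0 := by
    rw [map_posPart_of_map_sup hT, map_sub, map_abs_of_map_sup hT, map_smul,
      posPart_eq_zero, sub_nonpos]
    exact hTa
  have hzero := hinj _ hmem hker
  rw [posPart_eq_zero, sub_nonpos] at hzero
  exact eNorm_le_of_abs_le_smul (eNorm_nonneg _ _) hzero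

end LinearMap

theorem lattice_hom_eNorm_isometry_iff_injective_on_ideal
    {X Y : Type*}
    [Lattice X] [AddCommGroup X] [Module ℝ X]
    [CovariantClass X X (· + ·) (· ≤ ·)] [PosSMulMono ℝ X]
    [Lattice Y] [AddCommGroup Y] [Module ℝ Y]
    [CovariantClass Y Y (· + ·) (· ≤ ·)] [PosSMulMono ℝ Y]
    (harchX : ∀ x y : X, (∀ n : ℕ, n • x ≤ y) → x ≤ 0)
    (harchY : ∀ x y : Y, (∀ n : ℕ, n • x ≤ y) → x ≤ 0)
    (T : X →ₗ[ℝ] Y) (hT : ∀ a b : X, T (a ⊔ b) = T a ⊔ T b)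
    {m : ℕ} (x : Fin (m + 1) → X) (e : X)
    (he : e = Finset.univ.sup' ⟨0, Finset.mem_univ 0⟩ fun j => |x j|) :
    (∀ a : X, memIdeal e a → eNorm (T e) (T a) = eNorm e a) ↔
      (∀ a b : X, memIdeal e a → memIdeal e b → T a = T b → a = b) := by
  have he0 : 0 ≤ e :=
    he ▸ (abs_nonneg (x 0)).trans (Finset.le_sup' (fun j => |x j|) (Finset.mem_univ 0))
  constructor
  · intro hiso a b ha hb hab
    have hsub := ha.sub hb
    have hnorm : eNorm e (a - b) = 0 := by
      rw [← hiso _ hsub, map_sub, hab, sub_self, eNorm_zero]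
    exact sub_eq_zero.mp (eq_zero_of_eNorm_eq_zero harchX he0 hsub hnorm)
  · intro hinj a ha
    refine le_antisymm (T.eNorm_map_le_of_map_sup hT ha)
      (T.le_eNorm_map_of_map_sup hT harchY he0 (fun b hb hTb => ?_) ha)
    exact hinj b 0 hb (memIdeal_zero e) (by rw [hTb, map_zero])
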